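/- arXiv:1406.7773 — 2 statements merged into one kernel-verified Lean document; each statement's English description precedes it below -/
import Mathlib

section
/- Let l(x, θ) be a smooth log-density on parameter space Θ ⊆ ℝ^m such that for some smooth positive-definite matrix field g_{ij}(θ) one has ∂_i ∂_j l(x, θ) + g_{ij}(θ) = 0 for all x and θ. Then there exists a smooth function ψ(θ) with ∂_i ∂_j ψ = g_{ij}, and l takes the form l(x, θ) = l_0(x) + Σ_α θ^α t_α(x) − ψ(θ) for some functions l_0, t_α of x alone; i.e., the family is an exponential family in the parameter θ. -/
open scoped BigOperators

/-- Partial derivative in the direction of the `i`-th coordinate. -/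
noncomputable def pd {m : ℕ} (i : Fin m) (f : (Fin m → ℝ) → ℝ) (θ : Fin m → ℝ) : ℝ :=
  fderiv ℝ f θ (Pi.single i 1)

lemma pd_smooth {m : ℕ} (i : Fin m) {f : (Fin m → ℝ) → ℝ} (hf : ContDiff ℝ (⊤ : ℕ∞) f) :
    ContDiff ℝ (⊤ : ℕ∞) (pd i f) := by
  have h1 : ContDiff ℝ (⊤ : ℕ∞) (fderiv ℝ f) := hf.fderiv_right (by simp)
  exact (ContinuousLinearMap.apply ℝ ℝ (Pi.single i (1:ℝ))).contDiff.comp h1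

lemma vec_eq_sum {m : ℕ} (v : Fin m → ℝ) : v = ∑ a, v a • (Pi.single a 1 : Fin m → ℝ) := by
  funext j
  simp [Finset.sum_apply, Pi.single_apply]

lemma fderiv_apply_eq_sum {m : ℕ} {f : (Fin m → ℝ) → ℝ} {θ v : Fin m → ℝ} :
    fderiv ℝ f θ v = ∑ a, v a * pd a f θ := by
  conv_lhs => rw [vec_eq_sum v]
  rw [map_sum]
  simp [pd, smul_eq_mul]

lemma affine_of_pd2_zero {m : ℕ} {h : (Fin m → ℝ) → ℝ} (hh : ContDiff ℝ (⊤ : ℕ∞) h)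
    (h2 : ∀ θ i j, pd i (fun θ' => pd j h θ') θ = 0) :
    ∀ θ, h θ = h 0 + ∑ a, θ a * pd a h 0 := by
  have hgrad : ∀ j θ, pd j h θ = pd j h 0 := by
    intro j θ
    refine is_const_of_fderiv_eq_zero ((pd_smooth j hh).differentiable (by simp)) ?_ θ 0
    intro θ'
    ext v
    rw [ContinuousLinearMap.zero_apply, fderiv_apply_eq_sum]
    simp [h2]
  intro θ
  set L : (Fin m → ℝ) →L[ℝ] ℝ := ∑ b, pd b h 0 • ContinuousLinearMap.proj b with hL
  have hLval : ∀ w : Fin m → ℝ, L w = ∑ a, w a * pd a h 0 := by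
    intro w
    simp [hL, ContinuousLinearMap.sum_apply, mul_comm]
  have hconst : (fun θ => h θ - L θ) θ = (fun θ => h θ - L θ) 0 := by
    refine is_const_of_fderiv_eq_zero ((hh.differentiable (by simp)).sub L.differentiable) ?_ θ 0
    · intro θ'
      have : fderiv ℝ (fun θ => h θ - L θ) θ' = fderiv ℝ h θ' - L := by
        rw [fderiv_fun_sub ((hh.differentiable (by simp)) θ') (L.differentiableAt)]
        rw [L.fderiv]
      rw [show (h - ⇑L) = (fun θ => h θ - L θ) from rfl, this]
      ext v
      simp only [ContinuousLinearMap.sub_apply, ContinuousLinearMap.zero_apply]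
      rw [fderiv_apply_eq_sum, hLval]
      rw [sub_eq_zero]
      exact Finset.sum_congr rfl fun a _ => by rw [hgrad a θ']
  simp only at hconst
  have : L (0 : Fin m → ℝ) = 0 := by simp
  rw [this, sub_zero] at hconst
  have := hLval θ
  linarith [hconst, this]

/-- If a smooth log-density `l(x, θ)` on `ℝ^m` has deterministic Hessian:
`∂_i ∂_j l(x, θ) + g_{ij}(θ) = 0` for a smooth symmetric positive-definite matrix field
`g` independent of `x`, then `g` is the Hessian of a smooth potential `ψ` and
`l(x, θ) = l₀(x) + Σ_α θ^α t_α(x) − ψ(θ)`; i.e. the family is an exponential family. -/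
theorem stmt1 {m : ℕ} {X : Type*} [Nonempty X]
    (l : X → (Fin m → ℝ) → ℝ)
    (g : (Fin m → ℝ) → Fin m → Fin m → ℝ)
    (hl : ∀ x, ContDiff ℝ (⊤ : ℕ∞) (l x))
    (hgsmooth : ∀ i j, ContDiff ℝ (⊤ : ℕ∞) fun θ => g θ i j)
    (hgsymm : ∀ θ i j, g θ i j = g θ j i)
    (hgpos : ∀ θ (v : Fin m → ℝ), v ≠ 0 → 0 < ∑ i, ∑ j, g θ i j * v i * v j)
    (hHess : ∀ x θ i j, pd i (fun θ' => pd j (l x) θ') θ + g θ i j = 0) :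
    ∃ (ψ : (Fin m → ℝ) → ℝ) (l₀ : X → ℝ) (t : Fin m → X → ℝ),
      ContDiff ℝ (⊤ : ℕ∞) ψ ∧
      (∀ θ i j, pd i (fun θ' => pd j ψ θ') θ = g θ i j) ∧
      (∀ x θ, l x θ = l₀ x + (∑ a, θ a * t a x) - ψ θ) := by
  obtain ⟨x₀⟩ := ‹Nonempty X›
  set ψ : (Fin m → ℝ) → ℝ := fun θ => -(l x₀ θ) with hψ
  have hψsmooth : ContDiff ℝ (⊤ : ℕ∞) ψ := (hl x₀).neg
  -- pd of ψ
  have hpdψ : ∀ j θ, pd j ψ θ = -(pd j (l x₀) θ) := by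
    intro j θ
    simp only [pd, hψ]
    rw [fderiv_fun_neg]
    simp
  have hψHess : ∀ θ i j, pd i (fun θ' => pd j ψ θ') θ = g θ i j := by
    intro θ i j
    have : (fun θ' => pd j ψ θ') = fun θ' => -(pd j (l x₀) θ') := by
      ext θ'; exact hpdψ j θ'
    rw [this]
    show fderiv ℝ (fun θ' => -(pd j (l x₀) θ')) θ (Pi.single i 1) = g θ i j
    rw [fderiv_fun_neg]
    simp only [ContinuousLinearMap.neg_apply]
    show -(pd i (fun θ' => pd j (l x₀) θ') θ) = g θ i j
    linarith [hHess x₀ θ i j]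
  -- affine differences
  have key : ∀ x θ, l x θ - l x₀ θ = (l x 0 - l x₀ 0) +
      ∑ a, θ a * (pd a (fun θ' => l x θ' - l x₀ θ') 0) := by
    intro x θ
    have hh : ContDiff ℝ (⊤ : ℕ∞) (fun θ' => l x θ' - l x₀ θ') := (hl x).sub (hl x₀)
    have hpd : ∀ j θ', pd j (fun θ' => l x θ' - l x₀ θ') θ'
        = pd j (l x) θ' - pd j (l x₀) θ' := by
      intro j θ'
      simp only [pd]
      rw [fderiv_fun_sub ((hl x).differentiable (by simp) θ') ((hl x₀).differentiable (by simp) θ')]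
      simp
    have h2 : ∀ θ' i j, pd i (fun θ'' => pd j (fun θ' => l x θ' - l x₀ θ') θ'') θ' = 0 := by
      intro θ' i j
      have heq : (fun θ'' => pd j (fun θ' => l x θ' - l x₀ θ') θ'')
          = fun θ'' => pd j (l x) θ'' - pd j (l x₀) θ'' := by
        ext θ''; exact hpd j θ''
      rw [heq]
      show fderiv ℝ (fun θ'' => pd j (l x) θ'' - pd j (l x₀) θ'') θ' (Pi.single i 1) = 0
      rw [fderiv_fun_sub (((pd_smooth j (hl x)).differentiable (by simp)) θ')
        (((pd_smooth j (hl x₀)).differentiable (by simp)) θ')]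
      simp only [ContinuousLinearMap.sub_apply]
      show pd i (fun θ'' => pd j (l x) θ'') θ' - pd i (fun θ'' => pd j (l x₀) θ'') θ' = 0
      linarith [hHess x θ' i j, hHess x₀ θ' i j]
    have := affine_of_pd2_zero hh h2 θ
    simpa using this
  refine ⟨ψ, fun x => l x 0 - l x₀ 0, fun a x => pd a (fun θ' => l x θ' - l x₀ θ') 0,
    hψsmooth, hψHess, fun x θ => ?_⟩
  have := key x θ
  simp only [hψ]
  linarith
end

section
/- With the α-covariant derivative ∇_i^{(α)} r = ∂_i r − ((1+α)/2)⟨∂_i r⟩_θ + ((1−α)/2) r ∂_i l on sections of the Hilbert bundle, the curvature operator K_{ij}^{(α)} = ∇_i^{(α)} ∇_j^{(α)} − ∇_j^{(α)} ∇_i^{(α)} satisfies K_{ij}^{(α)} r = ((1−α²)/4)(⟨∂_i r⟩_θ ∂_j l − ⟨∂_j r⟩_θ ∂_i l). -/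
open scoped BigOperators

/-- The α-covariant derivative
`∇_i^{(α)} r = ∂_i r − ((1+α)/2)⟨∂_i r⟩_θ + ((1−α)/2) r ∂_i l` on sections,
with abstract expectation operator `E`. -/
noncomputable def covD {m : ℕ} {X : Type*} (α : ℝ)
    (E : (Fin m → ℝ) → (X → ℝ) → ℝ) (l : X → (Fin m → ℝ) → ℝ)
    (i : Fin m) (r : X → (Fin m → ℝ) → ℝ) : X → (Fin m → ℝ) → ℝ :=
  fun x θ => pd i (r x) θ - (1 + α) / 2 * E θ (fun y => pd i (r y) θ)
    + (1 - α) / 2 * (r x θ * pd i (l x) θ)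

section aux
variable {m : ℕ} {X : Type*}

lemma differentiable_pd {f : (Fin m → ℝ) → ℝ} (hf : ContDiff ℝ (⊤ : ℕ∞) f) (i : Fin m) :
    Differentiable ℝ (fun θ => pd i f θ) := by
  have h : ContDiff ℝ 1 (fun θ => fderiv ℝ f θ (Pi.single i 1)) :=
    (hf.fderiv_right (WithTop.coe_le_coe.mpr le_top)).clm_apply contDiff_const
  exact h.differentiable one_ne_zero

lemma pd_shape {u v w z : (Fin m → ℝ) → ℝ} {θ : Fin m → ℝ}
    (hu : DifferentiableAt ℝ u θ) (hv : DifferentiableAt ℝ v θ)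
    (hw : DifferentiableAt ℝ w θ) (hz : DifferentiableAt ℝ z θ) (c d : ℝ) (i : Fin m) :
    pd i (fun θ' => u θ' + c * (v θ' * w θ') + d * z θ') θ
      = pd i u θ + c * (v θ * pd i w θ + w θ * pd i v θ) + d * pd i z θ := by
  have H : HasFDerivAt (fun θ' => u θ' + c * (v θ' * w θ') + d * z θ')
      ((fderiv ℝ u θ + c • (v θ • fderiv ℝ w θ + w θ • fderiv ℝ v θ)) + d • fderiv ℝ z θ) θ :=
    ((hu.hasFDerivAt.add ((hv.hasFDerivAt.mul hw.hasFDerivAt).const_mul c)).add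
      (hz.hasFDerivAt.const_mul d))
  simp only [pd, H.fderiv, ContinuousLinearMap.add_apply, ContinuousLinearMap.smul_apply,
    smul_eq_mul]

lemma pd_comm {f : (Fin m → ℝ) → ℝ} (hf : ContDiff ℝ (⊤ : ℕ∞) f) (θ : Fin m → ℝ) (i j : Fin m) :
    pd i (fun θ' => pd j f θ') θ = pd j (fun θ' => pd i f θ') θ := by
  have hdf : Differentiable ℝ (fderiv ℝ f) :=
    (hf.fderiv_right (WithTop.coe_le_coe.mpr (le_top : (1 + 1 : ℕ∞) ≤ ⊤))).differentiable one_ne_zero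
  have key : ∀ v : Fin m → ℝ, fderiv ℝ (fun θ' => fderiv ℝ f θ' v) θ
      = (fderiv ℝ (fderiv ℝ f) θ).flip v := by
    intro v
    rw [fderiv_clm_apply (hdf.differentiableAt) (differentiableAt_const v)]
    simp
  have hsymm := second_derivative_symmetric
    (f' := fderiv ℝ f) (f'' := fderiv ℝ (fderiv ℝ f) θ) (x := θ)
    (fun y => ((hf.differentiable (by simp)) y).hasFDerivAt)
    (hdf.differentiableAt).hasFDerivAt
  simp only [pd, key]
  exact hsymm _ _

end aux

/-- The curvature operator `K_{ij}^{(α)} = ∇_i^{(α)} ∇_j^{(α)} − ∇_j^{(α)} ∇_i^{(α)}`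
satisfies `K_{ij}^{(α)} r = ((1−α²)/4)(⟨∂_i r⟩_θ ∂_j l − ⟨∂_j r⟩_θ ∂_i l)`. -/
theorem stmt3 {m : ℕ} {X : Type*} (α : ℝ)
    (E : (Fin m → ℝ) → (X → ℝ) → ℝ) (l : X → (Fin m → ℝ) → ℝ)
    (r : X → (Fin m → ℝ) → ℝ)
    (hlin : ∀ θ, IsLinearMap ℝ (E θ))
    (hE1 : ∀ θ, E θ (fun _ => 1) = 1)
    (hscore : ∀ θ i, E θ (fun x => pd i (l x) θ) = 0)
    (hlsmooth : ∀ x, ContDiff ℝ (⊤ : ℕ∞) (l x))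
    (hrsmooth : ∀ x, ContDiff ℝ (⊤ : ℕ∞) (r x))
    (hr0 : ∀ θ, E θ (fun x => r x θ) = 0)
    -- differentiation under the integral sign is valid:
    (hswap : ∀ (h : X → (Fin m → ℝ) → ℝ) (θ : Fin m → ℝ) (i : Fin m),
      pd i (fun θ' => E θ' (fun x => h x θ')) θ
        = E θ (fun x => pd i (h x) θ) + E θ (fun x => h x θ * pd i (l x) θ)) :
    ∀ (x : X) (θ : Fin m → ℝ) (i j : Fin m),
      covD α E l i (covD α E l j r) x θ - covD α E l j (covD α E l i r) x θ
        = (1 - α ^ 2) / 4 *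
            (E θ (fun y => pd i (r y) θ) * pd j (l x) θ
              - E θ (fun y => pd j (r y) θ) * pd i (l x) θ) := by
  -- basic linearity facts about E
  have Eadd : ∀ θ (a b : X → ℝ), E θ (fun x => a x + b x) = E θ a + E θ b :=
    fun θ a b => (hlin θ).map_add a b
  have Esmul : ∀ θ (a : X → ℝ) (c : ℝ), E θ (fun x => c * a x) = c * E θ a :=
    fun θ a c => (hlin θ).map_smul c a
  have Econst : ∀ θ (c : ℝ), E θ (fun _ => c) = c := by
    intro θ c
    have h : (fun _ : X => c) = (fun x => c * (fun _ : X => (1:ℝ)) x) := by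
      funext _; ring
    rw [h, Esmul, hE1, mul_one]
  -- differentiability facts
  have dr : ∀ y, Differentiable ℝ (r y) := fun y => (hrsmooth y).differentiable (by simp)
  have dl : ∀ y, Differentiable ℝ (l y) := fun y => (hlsmooth y).differentiable (by simp)
  have dpdr : ∀ y (k : Fin m), Differentiable ℝ (fun θ => pd k (r y) θ) :=
    fun y k => differentiable_pd (hrsmooth y) k
  have dpdl : ∀ y (k : Fin m), Differentiable ℝ (fun θ => pd k (l y) θ) :=
    fun y k => differentiable_pd (hlsmooth y) k
  intro x θ i j
  -- Step B : derivative of the section covD j r at a point x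
  have hB : ∀ (x : X) (i j : Fin m),
      pd i (fun θ' => covD α E l j r x θ') θ
        = pd i (fun θ' => pd j (r x) θ') θ
          + (1 - α) / 2 * (r x θ * pd i (fun θ' => pd j (l x) θ') θ
              + pd j (l x) θ * pd i (r x) θ)
          + (-(1 + α) / 2) * E θ (fun y => pd i (fun θ' => pd j (r y) θ') θ)
          + (-(1 + α) / 2) * E θ (fun y => pd j (r y) θ * pd i (l y) θ) := by
    intro x i j
    have hrepr : (fun θ' => covD α E l j r x θ')
        = fun θ' => E θ' (fun y => pd j (r x) θ' + (1 - α) / 2 * (r x θ' * pd j (l x) θ')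
            + (-(1 + α) / 2) * pd j (r y) θ') := by
      funext θ'
      rw [Eadd θ', Esmul θ', Econst θ']
      simp only [covD]
      ring
    rw [hrepr, hswap (fun y θ' => pd j (r x) θ' + (1 - α) / 2 * (r x θ' * pd j (l x) θ')
            + (-(1 + α) / 2) * pd j (r y) θ') θ i]
    have e1 : ∀ y : X,
        pd i (fun θ' => pd j (r x) θ' + (1 - α) / 2 * (r x θ' * pd j (l x) θ')
            + (-(1 + α) / 2) * pd j (r y) θ') θ
          = (pd i (fun θ' => pd j (r x) θ') θ
              + (1 - α) / 2 * (r x θ * pd i (fun θ' => pd j (l x) θ') θ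
                  + pd j (l x) θ * pd i (r x) θ))
            + (-(1 + α) / 2) * pd i (fun θ' => pd j (r y) θ') θ := by
      intro y
      exact pd_shape (dpdr x j θ) (dr x θ) (dpdl x j θ) (dpdr y j θ) ((1 - α) / 2)
        (-(1 + α) / 2) i
    have h1 : E θ (fun y => pd i (fun θ' => pd j (r x) θ' + (1 - α) / 2 * (r x θ' * pd j (l x) θ')
            + (-(1 + α) / 2) * pd j (r y) θ') θ)
        = (pd i (fun θ' => pd j (r x) θ') θ
              + (1 - α) / 2 * (r x θ * pd i (fun θ' => pd j (l x) θ') θ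
                  + pd j (l x) θ * pd i (r x) θ))
          + (-(1 + α) / 2) * E θ (fun y => pd i (fun θ' => pd j (r y) θ') θ) := by
      rw [show (fun y => pd i (fun θ' => pd j (r x) θ' + (1 - α) / 2 * (r x θ' * pd j (l x) θ')
            + (-(1 + α) / 2) * pd j (r y) θ') θ)
          = (fun y => (pd i (fun θ' => pd j (r x) θ') θ
              + (1 - α) / 2 * (r x θ * pd i (fun θ' => pd j (l x) θ') θ
                  + pd j (l x) θ * pd i (r x) θ))
            + (-(1 + α) / 2) * pd i (fun θ' => pd j (r y) θ') θ) from funext e1]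
      rw [Eadd θ, Esmul θ, Econst θ]
    have h2 : E θ (fun y => (pd j (r x) θ + (1 - α) / 2 * (r x θ * pd j (l x) θ)
            + (-(1 + α) / 2) * pd j (r y) θ) * pd i (l y) θ)
        = (-(1 + α) / 2) * E θ (fun y => pd j (r y) θ * pd i (l y) θ) := by
      rw [show (fun y => (pd j (r x) θ + (1 - α) / 2 * (r x θ * pd j (l x) θ)
            + (-(1 + α) / 2) * pd j (r y) θ) * pd i (l y) θ)
          = (fun y => (pd j (r x) θ + (1 - α) / 2 * (r x θ * pd j (l x) θ)) * pd i (l y) θ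
              + (-(1 + α) / 2) * (pd j (r y) θ * pd i (l y) θ)) from by funext y; ring]
      rw [Eadd θ, Esmul θ, Esmul θ, hscore θ i]
      ring
    rw [h1, h2]
  -- Step C : expectation of the derivative of the section
  have hC : ∀ (i j : Fin m),
      E θ (fun y => pd i (fun θ' => covD α E l j r y θ') θ)
        = E θ (fun y => pd i (fun θ' => pd j (r y) θ') θ)
          + (1 - α) / 2 * E θ (fun y => r y θ * pd i (fun θ' => pd j (l y) θ') θ)
          + (1 - α) / 2 * E θ (fun y => pd j (l y) θ * pd i (r y) θ)
          - (1 + α) / 2 * E θ (fun y => pd i (fun θ' => pd j (r y) θ') θ)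
          - (1 + α) / 2 * E θ (fun y => pd j (r y) θ * pd i (l y) θ) := by
    intro i j
    have e3 : (fun y => pd i (fun θ' => covD α E l j r y θ') θ)
        = fun y => (pd i (fun θ' => pd j (r y) θ') θ
            + (1 - α) / 2 * (r y θ * pd i (fun θ' => pd j (l y) θ') θ)
            + (1 - α) / 2 * (pd j (l y) θ * pd i (r y) θ))
          + ((-(1 + α) / 2) * E θ (fun y => pd i (fun θ' => pd j (r y) θ') θ)
              + (-(1 + α) / 2) * E θ (fun y => pd j (r y) θ * pd i (l y) θ)) := by
      funext y
      rw [hB y i j]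
      ring
    rw [e3, Eadd θ, Econst θ]
    rw [show (fun y => pd i (fun θ' => pd j (r y) θ') θ
            + (1 - α) / 2 * (r y θ * pd i (fun θ' => pd j (l y) θ') θ)
            + (1 - α) / 2 * (pd j (l y) θ * pd i (r y) θ))
        = (fun y => pd i (fun θ' => pd j (r y) θ') θ
            + ((1 - α) / 2 * (r y θ * pd i (fun θ' => pd j (l y) θ') θ)
              + (1 - α) / 2 * (pd j (l y) θ * pd i (r y) θ))) from by funext y; ring]
    rw [Eadd θ, Eadd θ, Esmul θ, Esmul θ]
    ring
  -- Step D : assemble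
  have key : ∀ (i j : Fin m),
      covD α E l i (covD α E l j r) x θ
        = (pd i (fun θ' => pd j (r x) θ') θ
            + (1 - α) / 2 * (r x θ * pd i (fun θ' => pd j (l x) θ') θ
                + pd j (l x) θ * pd i (r x) θ)
            + (-(1 + α) / 2) * E θ (fun y => pd i (fun θ' => pd j (r y) θ') θ)
            + (-(1 + α) / 2) * E θ (fun y => pd j (r y) θ * pd i (l y) θ))
          - (1 + α) / 2 * (E θ (fun y => pd i (fun θ' => pd j (r y) θ') θ)
              + (1 - α) / 2 * E θ (fun y => r y θ * pd i (fun θ' => pd j (l y) θ') θ)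
              + (1 - α) / 2 * E θ (fun y => pd j (l y) θ * pd i (r y) θ)
              - (1 + α) / 2 * E θ (fun y => pd i (fun θ' => pd j (r y) θ') θ)
              - (1 + α) / 2 * E θ (fun y => pd j (r y) θ * pd i (l y) θ))
          + (1 - α) / 2 * ((pd j (r x) θ - (1 + α) / 2 * E θ (fun y => pd j (r y) θ)
              + (1 - α) / 2 * (r x θ * pd j (l x) θ)) * pd i (l x) θ) := by
    intro i j
    have unf : covD α E l i (covD α E l j r) x θ
        = pd i (fun θ' => covD α E l j r x θ') θ
          - (1 + α) / 2 * E θ (fun y => pd i (fun θ' => covD α E l j r y θ') θ)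
          + (1 - α) / 2 * ((pd j (r x) θ - (1 + α) / 2 * E θ (fun y => pd j (r y) θ)
              + (1 - α) / 2 * (r x θ * pd j (l x) θ)) * pd i (l x) θ) := rfl
    rw [unf, hB x i j, hC i j]
  rw [key i j, key j i]
  -- symmetry of second derivatives and commutativity inside expectations
  have s1 : pd i (fun θ' => pd j (r x) θ') θ = pd j (fun θ' => pd i (r x) θ') θ :=
    pd_comm (hrsmooth x) θ i j
  have s2 : pd i (fun θ' => pd j (l x) θ') θ = pd j (fun θ' => pd i (l x) θ') θ :=
    pd_comm (hlsmooth x) θ i j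
  have s3 : E θ (fun y => pd i (fun θ' => pd j (r y) θ') θ)
      = E θ (fun y => pd j (fun θ' => pd i (r y) θ') θ) :=
    congrArg (E θ) (funext fun y => pd_comm (hrsmooth y) θ i j)
  have s4 : E θ (fun y => r y θ * pd i (fun θ' => pd j (l y) θ') θ)
      = E θ (fun y => r y θ * pd j (fun θ' => pd i (l y) θ') θ) :=
    congrArg (E θ) (funext fun y => by rw [pd_comm (hlsmooth y) θ i j])
  have c1 : E θ (fun y => pd j (l y) θ * pd i (r y) θ)
      = E θ (fun y => pd i (r y) θ * pd j (l y) θ) :=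
    congrArg (E θ) (funext fun y => mul_comm _ _)
  have c2 : E θ (fun y => pd i (l y) θ * pd j (r y) θ)
      = E θ (fun y => pd j (r y) θ * pd i (l y) θ) :=
    congrArg (E θ) (funext fun y => mul_comm _ _)
  rw [s1, s2, s3, s4, c1, c2]
  ring
end
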